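/- arXiv:2004.10721 — 2 statements merged into one kernel-verified Lean document; each statement's English description precedes it below -/
import Mathlib

section
/- Let (X_k)_{k≥1} be a sequence of non-negative random variables with finite second moments such that (a) sup_k E[X_k] < ∞, (b) E[X_j X_k] ≤ E[X_j]·E[X_k] for all j ≠ k, and (c) ∑_{k≥1} Var(X_k)/k² < ∞. Let S_m = X_1 + ⋯ + X_m. Then (S_m − E[S_m])/m → 0 almost surely. -/
/-!
Negative correlation gives `Var S_m ≤ ∑_{j<m} Var X_j`. Along a geometric subsequence
`m_n = ⌊c ^ n⌋₊` (`c > 1`) we have `∑_{n : m_n > j} 1 / m_n² = O(1 / j²)`, so exchanging the sums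
shows `∑_n Var(S_{m_n} / m_n) < ∞`; Chebyshev and Borel–Cantelli then give
`(S_{m_n} - E S_{m_n}) / m_n → 0` almost surely. Since `X_k ≥ 0` and `E X_k ≤ C`, the sequence
`S_m - E S_m + C m` is non-decreasing, which controls it between consecutive terms of the
subsequence up to a factor close to `c`; letting `c ↓ 1` along countably many values finishes.
-/

open MeasureTheory ProbabilityTheory Filter Finset Topology

lemma sum_inv_floor_pow_sq_le {c : ℝ} (hc : 1 < c) (N j : ℕ) :
    ∑ i ∈ range N with j < ⌊c ^ i⌋₊, 1 / (⌊c ^ i⌋₊ : ℝ) ^ 2 ≤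
      4 * (c ^ 5 * (c - 1)⁻¹ ^ 3) / ((j : ℝ) + 1) ^ 2 := by
  -- `sum_div_nat_floor_pow_sq_le_div_sq` needs a positive real threshold; `j + 1/2` cuts out
  -- the same indices as `j` and also covers `j = 0`.
  have hfilter : ∀ i, j < ⌊c ^ i⌋₊ ↔ (j + 1 / 2 : ℝ) < ⌊c ^ i⌋₊ := fun i => by
    constructor
    · intro h
      have : (j : ℝ) + 1 ≤ ⌊c ^ i⌋₊ := by exact_mod_cast h
      linarith
    · intro h
      have : (j : ℝ) < ⌊c ^ i⌋₊ := by linarith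
      exact_mod_cast this
  calc ∑ i ∈ range N with j < ⌊c ^ i⌋₊, 1 / (⌊c ^ i⌋₊ : ℝ) ^ 2
      = ∑ i ∈ range N with (j + 1 / 2 : ℝ) < ⌊c ^ i⌋₊, 1 / (⌊c ^ i⌋₊ : ℝ) ^ 2 := by
        simp_rw [hfilter]
    _ ≤ c ^ 5 * (c - 1)⁻¹ ^ 3 / (j + 1 / 2) ^ 2 :=
        sum_div_nat_floor_pow_sq_le_div_sq N (by positivity) hc
    _ ≤ c ^ 5 * (c - 1)⁻¹ ^ 3 / (((j : ℝ) + 1) / 2) ^ 2 := by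
        gcongr
        linarith
    _ = 4 * (c ^ 5 * (c - 1)⁻¹ ^ 3) / ((j : ℝ) + 1) ^ 2 := by
        rw [div_pow, div_div_eq_mul_div]
        ring

lemma summable_sum_range_div_floor_pow_sq {c : ℝ} (hc : 1 < c) {v : ℕ → ℝ} (hv : ∀ j, 0 ≤ v j)
    (hsum : Summable fun j : ℕ => v j / ((j : ℝ) + 1) ^ 2) :
    Summable fun n : ℕ => (∑ j ∈ range ⌊c ^ n⌋₊, v j) / (⌊c ^ n⌋₊ : ℝ) ^ 2 := by
  set u : ℕ → ℕ := fun n => ⌊c ^ n⌋₊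
  set K : ℝ := 4 * (c ^ 5 * (c - 1)⁻¹ ^ 3)
  have hu_mono : Monotone u := fun i j hij => Nat.floor_mono (pow_right_mono₀ hc.le hij)
  refine summable_of_sum_range_le (c := K * ∑' j, v j / ((j : ℝ) + 1) ^ 2)
    (fun n => div_nonneg (sum_nonneg fun j _ => hv j) (sq_nonneg _)) fun N => ?_
  calc ∑ i ∈ range N, (∑ j ∈ range (u i), v j) / (u i : ℝ) ^ 2
      = ∑ j ∈ range (u N), (∑ i ∈ range N with j < u i, 1 / (u i : ℝ) ^ 2) * v j := by
        simp_rw [sum_div, sum_mul]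
        rw [sum_comm' (t' := range (u N)) (s' := fun j => {i ∈ range N | j < u i})]
        · exact sum_congr rfl fun j _ => sum_congr rfl fun i _ => by ring
        · intro i j
          simp only [mem_range, mem_filter]
          exact ⟨fun h => ⟨h, h.2.trans_le (hu_mono h.1.le)⟩, fun h => h.1⟩
    _ ≤ ∑ j ∈ range (u N), K / ((j : ℝ) + 1) ^ 2 * v j := by
        gcongr with j
        · exact hv j
        · exact sum_inv_floor_pow_sq_le hc N j
    _ = K * ∑ j ∈ range (u N), v j / ((j : ℝ) + 1) ^ 2 := by
        rw [mul_sum]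
        exact sum_congr rfl fun j _ => by ring
    _ ≤ K * ∑' j, v j / ((j : ℝ) + 1) ^ 2 := by
        gcongr
        exact hsum.sum_le_tsum _ fun j _ => div_nonneg (hv j) (by positivity)

lemma tendsto_div_of_monotone_add_mul_of_tendsto_div_floor_pow {d : ℕ → ℝ} {C : ℝ}
    (hmono : Monotone fun m : ℕ => d m + C * m) (c : ℕ → ℝ) (hc : ∀ k, 1 < c k)
    (hclim : Tendsto c atTop (𝓝 1))
    (hsub : ∀ k, Tendsto (fun n : ℕ => d ⌊c k ^ n⌋₊ / ⌊c k ^ n⌋₊) atTop (𝓝 0)) :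
    Tendsto (fun m : ℕ => d m / m) atTop (𝓝 0) := by
  have hshift : ∀ m : ℕ, 0 < m → (d m + C * m) / m = d m / m + C := fun m hm => by
    have : (m : ℝ) ≠ 0 := by exact_mod_cast hm.ne'
    field_simp
  have hlim := tendsto_div_of_monotone_of_tendsto_div_floor_pow _ C hmono c hc hclim fun k => by
    have h := (hsub k).add_const C
    rw [zero_add] at h
    refine h.congr fun n => ?_
    exact (hshift _ (Nat.floor_pos.2 (one_le_pow₀ (hc k).le))).symm
  simpa using (hlim.sub_const C).congr' <|
    (eventually_gt_atTop 0).mono fun m hm => by rw [hshift m hm, add_sub_cancel_right]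

section Probability

variable {Ω : Type*} {mΩ : MeasurableSpace Ω} {μ : Measure Ω}

lemma variance_sum_le_sum_variance [IsFiniteMeasure μ] {ι : Type*} {s : Finset ι}
    {X : ι → Ω → ℝ} (hX : ∀ i ∈ s, MemLp (X i) 2 μ)
    (hcov : ∀ i ∈ s, ∀ j ∈ s, i ≠ j → cov[X i, X j; μ] ≤ 0) :
    Var[fun ω => ∑ i ∈ s, X i ω; μ] ≤ ∑ i ∈ s, Var[X i; μ] := by
  classical
  rw [variance_fun_sum' hX]
  refine sum_le_sum fun i hi => ?_
  calc ∑ j ∈ s, cov[X i, X j; μ] ≤ ∑ j ∈ s, if i = j then Var[X i; μ] else 0 := by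
        refine sum_le_sum fun j hj => ?_
        split_ifs with hij
        · rw [← hij, covariance_self (hX i hi).aemeasurable]
        · exact hcov i hi j hj hij
    _ = Var[X i; μ] := by rw [sum_ite_eq, if_pos hi]

lemma ae_eventually_abs_sub_integral_lt_of_summable_variance [IsFiniteMeasure μ]
    {Y : ℕ → Ω → ℝ} (hY : ∀ n, MemLp (Y n) 2 μ) (hsum : Summable fun n => Var[Y n; μ])
    {ε : ℝ} (hε : 0 < ε) :
    ∀ᵐ ω ∂μ, ∀ᶠ n in atTop, |Y n ω - μ[Y n]| < ε := by
  have hfin : ∑' n, μ {ω | ε ≤ |Y n ω - μ[Y n]|} ≠ ⊤ := by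
    refine ne_top_of_le_ne_top (b := ENNReal.ofReal (∑' n, Var[Y n; μ] / ε ^ 2))
      ENNReal.ofReal_ne_top
      ((ENNReal.tsum_le_tsum fun n => meas_ge_le_variance_div_sq (hY n) hε).trans_eq ?_)
    exact (ENNReal.ofReal_tsum_of_nonneg
      (fun n => div_nonneg (variance_nonneg _ _) (sq_nonneg _)) (hsum.div_const _)).symm
  filter_upwards [ae_eventually_notMem hfin] with ω hω
  simpa only [Set.mem_ofPred_eq, not_le] using hω

lemma ae_tendsto_sub_integral_of_summable_variance [IsFiniteMeasure μ] {Y : ℕ → Ω → ℝ}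
    (hY : ∀ n, MemLp (Y n) 2 μ) (hsum : Summable fun n => Var[Y n; μ]) :
    ∀ᵐ ω ∂μ, Tendsto (fun n => Y n ω - μ[Y n]) atTop (𝓝 0) := by
  have h := fun k : ℕ => ae_eventually_abs_sub_integral_lt_of_summable_variance hY hsum
    (Nat.one_div_pos_of_nat (n := k))
  filter_upwards [ae_all_iff.2 h] with ω hω
  refine Metric.tendsto_nhds.2 fun ε hε => ?_
  obtain ⟨k, hk⟩ := exists_nat_one_div_lt hε
  filter_upwards [hω k] with n hn
  rw [Real.dist_0_eq_abs]
  exact hn.trans hk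

lemma ae_tendsto_sub_integral_div_floor_pow [IsFiniteMeasure μ] {S : ℕ → Ω → ℝ}
    (hS : ∀ m, MemLp (S m) 2 μ) {v : ℕ → ℝ} (hv : ∀ j, 0 ≤ v j)
    (hVar : ∀ m, Var[S m; μ] ≤ ∑ j ∈ range m, v j)
    (hsum : Summable fun j : ℕ => v j / ((j : ℝ) + 1) ^ 2) {c : ℝ} (hc : 1 < c) :
    ∀ᵐ ω ∂μ, Tendsto (fun n : ℕ => (S ⌊c ^ n⌋₊ ω - μ[S ⌊c ^ n⌋₊]) / ⌊c ^ n⌋₊) atTop (𝓝 0) := by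
  set u : ℕ → ℕ := fun n => ⌊c ^ n⌋₊
  have hY : ∀ n, MemLp (fun ω => S (u n) ω / u n) 2 μ := fun n => by
    simpa only [div_eq_mul_inv] using (hS (u n)).mul_const _
  have hVarY : ∀ n, Var[fun ω => S (u n) ω / u n; μ] ≤
      (∑ j ∈ range (u n), v j) / (u n : ℝ) ^ 2 := fun n => by
    simp_rw [div_eq_mul_inv, variance_mul_const, inv_pow]
    gcongr
    exact hVar _
  have hsumY := (summable_sum_range_div_floor_pow_sq hc hv hsum).of_nonneg_of_le
    (fun n => variance_nonneg _ _) hVarY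
  filter_upwards [ae_tendsto_sub_integral_of_summable_variance hY hsumY] with ω hω
  refine hω.congr fun n => ?_
  rw [integral_div, sub_div]

end Probability

theorem stmt2_general {Ω : Type*} [MeasureSpace Ω] [IsProbabilityMeasure (ℙ : Measure Ω)]
    (X : ℕ → Ω → ℝ)
    (hnn : ∀ k ω, 0 ≤ X k ω)
    (hL2 : ∀ k, MemLp (X k) 2 ℙ)
    (ha : ∃ C : ℝ, ∀ k, ∫ ω, X k ω ≤ C)
    (hb : ∀ j k, j ≠ k → ∫ ω, X j ω * X k ω ≤ (∫ ω, X j ω) * ∫ ω, X k ω)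
    (hc : Summable fun k : ℕ => variance (X k) ℙ / ((k : ℝ) + 1) ^ 2) :
    ∀ᵐ ω, Tendsto
      (fun m : ℕ =>
        ((∑ j ∈ Finset.range m, X j ω) - ∑ j ∈ Finset.range m, ∫ ω', X j ω') / m)
      atTop (nhds 0) := by
  obtain ⟨C, hC⟩ := ha
  set S : ℕ → Ω → ℝ := fun m ω => ∑ j ∈ range m, X j ω
  have hS : ∀ m, MemLp (S m) 2 ℙ := fun m => memLp_finsetSum _ fun j _ => hL2 j
  have hES : ∀ m, ∫ ω, S m ω = ∑ j ∈ range m, ∫ ω, X j ω := fun m =>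
    integral_finsetSum _ fun j _ => (hL2 j).integrable one_le_two
  have hcov : ∀ j k, j ≠ k → cov[X j, X k; ℙ] ≤ 0 := fun j k hjk => by
    rw [covariance_eq_sub (hL2 j) (hL2 k), sub_nonpos]
    exact hb j k hjk
  have hVar : ∀ m, Var[S m; ℙ] ≤ ∑ j ∈ range m, Var[X j; ℙ] := fun m =>
    variance_sum_le_sum_variance (fun j _ => hL2 j) fun j _ k _ => hcov j k
  obtain ⟨c, -, hc1, hclim⟩ := exists_seq_strictAnti_tendsto (1 : ℝ)
  have hsub := fun k => ae_tendsto_sub_integral_div_floor_pow hS (fun j => variance_nonneg _ _)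
    hVar hc (hc1 k)
  filter_upwards [ae_all_iff.2 hsub] with ω hω
  refine tendsto_div_of_monotone_add_mul_of_tendsto_div_floor_pow (C := C)
    (monotone_nat_of_le_succ fun m => ?_) c hc1 hclim fun k => by simpa only [hES] using hω k
  simp only [sum_range_succ, Nat.cast_succ]
  linarith [hnn m ω, hC m]

/-- Etemadi's strong law: non-negative random variables with finite second
moments, uniformly bounded means, `E[X_j X_k] ≤ E[X_j] E[X_k]` for `j ≠ k`, and
`∑ Var(X_k)/k² < ∞` satisfy `(S_m − E S_m)/m → 0` almost surely. -/
theorem stmt2 {Ω : Type*} [MeasureSpace Ω] [IsProbabilityMeasure (ℙ : Measure Ω)]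
    (X : ℕ → Ω → ℝ)
    (hmeas : ∀ k, Measurable (X k))
    (hnn : ∀ k ω, 0 ≤ X k ω)
    (hL2 : ∀ k, MemLp (X k) 2 ℙ)
    (ha : ∃ C : ℝ, ∀ k, ∫ ω, X k ω ≤ C)
    (hb : ∀ j k, j ≠ k → ∫ ω, X j ω * X k ω ≤ (∫ ω, X j ω) * ∫ ω, X k ω)
    (hc : Summable fun k : ℕ => variance (X k) ℙ / ((k : ℝ) + 1) ^ 2) :
    ∀ᵐ ω, Tendsto
      (fun m : ℕ =>
        ((∑ j ∈ Finset.range m, X j ω) - ∑ j ∈ Finset.range m, ∫ ω', X j ω') / m)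
      atTop (nhds 0) :=
  stmt2_general X hnn hL2 ha hb hc
end

section
/- Let (f_j)_{j≥1} be a sequence of measurable functions on a probability space, uniformly bounded by a constant M, each with zero mean, and mutually orthogonal in L² (∫ f_i f_j dμ = 0 for i ≠ j). Then (1/m)·∑_{j=1}^m f_j(x) → 0 for μ-almost every x. -/
/-!
By orthogonality, `∫ (S m / m)² = (∑_{j<m} ∫ f_j²) / m² ≤ M² / m`, where `S m = ∑_{j<m} f j`.
Along the squares `m = n²` these bounds are summable, so `∑ₙ (S (n²) / n²)²` is finite almost
everywhere and `S (n²) / n² → 0` a.e. Between consecutive squares `S` changes by at most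
`2 n M`, which is negligible compared with `n²`.
-/

open MeasureTheory Filter Finset Topology

section

variable {Ω ι : Type*} [MeasurableSpace Ω] {μ : Measure Ω}

theorem integral_sq_sum_of_orthogonal (s : Finset ι) {f : ι → Ω → ℝ}
    (hf : ∀ i, MemLp (f i) 2 μ) (horth : ∀ i j, i ≠ j → ∫ x, f i x * f j x ∂μ = 0) :
    ∫ x, (∑ i ∈ s, f i x) ^ 2 ∂μ = ∑ i ∈ s, ∫ x, f i x ^ 2 ∂μ := by
  have hint : ∀ i j, Integrable (fun x => f i x * f j x) μ := fun i j =>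
    (hf i).integrable_mul (hf j)
  simp_rw [sq, Finset.sum_mul_sum]
  rw [integral_finsetSum _ fun i _ => integrable_finsetSum _ fun j _ => hint i j]
  refine Finset.sum_congr rfl fun i hi => ?_
  rw [integral_finsetSum _ fun j _ => hint i j]
  exact Finset.sum_eq_single_of_mem i hi fun j _ hji => horth i j hji.symm

theorem ae_tendsto_zero_of_summable_integral_sq {g : ℕ → Ω → ℝ} (hg : ∀ n, MemLp (g n) 2 μ)
    (hsum : Summable fun n => ∫ x, g n x ^ 2 ∂μ) :
    ∀ᵐ x ∂μ, Tendsto (fun n => g n x) atTop (𝓝 0) := by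
  have heLp : ∀ n, eLpNorm (fun x => g n x ^ 2) 1 μ = ENNReal.ofReal (∫ x, g n x ^ 2 ∂μ) := by
    intro n
    rw [eLpNorm_one_eq_lintegral_enorm, ofReal_integral_eq_lintegral_ofReal (hg n).integrable_sq
      (ae_of_all _ fun x => sq_nonneg _)]
    exact lintegral_congr fun x => Real.enorm_of_nonneg (sq_nonneg _)
  have hfin : ∑' n, eLpNorm (fun x => g n x ^ 2) 1 μ ≠ ⊤ := by
    simp_rw [heLp, ← ENNReal.ofReal_tsum_of_nonneg
      (fun n => integral_nonneg fun x => sq_nonneg _) hsum]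
    exact ENNReal.ofReal_ne_top
  filter_upwards [summable_norm_of_tsum_eLpNorm_ne_top le_rfl
    (fun n => (hg n).aestronglyMeasurable.pow 2) hfin] with x hx
  rw [tendsto_zero_iff_norm_tendsto_zero]
  have hsq : Tendsto (fun n => ‖g n x‖ ^ 2) atTop (𝓝 0) := by
    simpa only [Pi.pow_apply, norm_pow] using hx.tendsto_atTop_zero
  simpa only [Real.sqrt_sq (norm_nonneg _), Function.comp_def, Real.sqrt_zero] using
    (Real.continuous_sqrt.tendsto 0).comp hsq

theorem integral_sq_sum_range_div_le {f : ℕ → Ω → ℝ} {C : ℝ} (hf : ∀ j, MemLp (f j) 2 μ)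
    (horth : ∀ i j, i ≠ j → ∫ x, f i x * f j x ∂μ = 0) (hC : ∀ j, ∫ x, f j x ^ 2 ∂μ ≤ C)
    (m : ℕ) : ∫ x, ((∑ j ∈ range m, f j x) / m) ^ 2 ∂μ ≤ C / m := by
  calc ∫ x, ((∑ j ∈ range m, f j x) / m) ^ 2 ∂μ
      = (∑ j ∈ range m, ∫ x, f j x ^ 2 ∂μ) / (m : ℝ) ^ 2 := by
        simp_rw [div_pow]
        rw [integral_div, integral_sq_sum_of_orthogonal _ hf horth]
    _ ≤ (m * C) / (m : ℝ) ^ 2 := by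
        gcongr
        simpa using sum_le_sum fun j (_ : j ∈ range m) => hC j
    _ = C / m := by
        rcases eq_or_ne (m : ℝ) 0 with hm | hm
        · simp [hm]
        · field_simp

end

theorem Nat.tendsto_sqrt_atTop : Tendsto Nat.sqrt atTop atTop :=
  tendsto_atTop_atTop_of_monotone (fun _ _ h => Nat.sqrt_le_sqrt h)
    fun b => ⟨b ^ 2, (Nat.sqrt_eq' b).ge⟩

theorem abs_sum_range_sub_sum_range_le {a : ℕ → ℝ} {M : ℝ} (ha : ∀ j, |a j| ≤ M) {k m : ℕ}
    (hkm : k ≤ m) : |∑ j ∈ range m, a j - ∑ j ∈ range k, a j| ≤ (m - k : ℕ) * M := by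
  rw [← Finset.sum_Ico_eq_sub _ hkm]
  calc |∑ j ∈ Ico k m, a j| ≤ ∑ j ∈ Ico k m, |a j| := abs_sum_le_sum_abs _ _
    _ ≤ ∑ _j ∈ Ico k m, M := sum_le_sum fun j _ => ha j
    _ = (m - k : ℕ) * M := by rw [sum_const, Nat.card_Ico, nsmul_eq_mul]

theorem tendsto_sum_range_div_of_tendsto_sq {a : ℕ → ℝ} {M : ℝ} (ha : ∀ j, |a j| ≤ M)
    (h : Tendsto (fun n : ℕ => (∑ j ∈ range (n ^ 2), a j) / ((n ^ 2 : ℕ) : ℝ)) atTop (𝓝 0)) :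
    Tendsto (fun m : ℕ => (∑ j ∈ range m, a j) / m) atTop (𝓝 0) := by
  have hM : 0 ≤ M := (abs_nonneg _).trans (ha 0)
  have hbound : ∀ m : ℕ, 1 ≤ m → ‖(∑ j ∈ range m, a j) / m‖ ≤
      |(∑ j ∈ range (m.sqrt ^ 2), a j) / ((m.sqrt ^ 2 : ℕ) : ℝ)| + 2 * M / m.sqrt := by
    intro m hm
    set n := m.sqrt
    have hn : (0 : ℝ) < n := by exact_mod_cast Nat.sqrt_pos.mpr hm
    have hle : n ^ 2 ≤ m := Nat.sqrt_le' m
    have hgap : m - n ^ 2 ≤ 2 * n := by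
      have hlt : m < (n + 1) ^ 2 := Nat.lt_succ_sqrt' m
      rw [Nat.sub_le_iff_le_add]
      nlinarith
    have hdiff := abs_sum_range_sub_sum_range_le ha hle
    have hgap' : ((m - n ^ 2 : ℕ) : ℝ) * M ≤ 2 * n * M := by gcongr; exact_mod_cast hgap
    have hle' : (n : ℝ) ^ 2 ≤ m := by exact_mod_cast hle
    rw [Real.norm_eq_abs, abs_div, abs_div, Nat.abs_cast, Nat.abs_cast]
    push_cast
    calc |∑ j ∈ range m, a j| / m
        ≤ (|∑ j ∈ range (n ^ 2), a j| + 2 * n * M) / n ^ 2 := by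
          gcongr
          linarith [abs_sub_abs_le_abs_sub (∑ j ∈ range m, a j) (∑ j ∈ range (n ^ 2), a j)]
      _ = |∑ j ∈ range (n ^ 2), a j| / n ^ 2 + 2 * M / n := by field_simp
  have hrhs : Tendsto (fun n : ℕ => |(∑ j ∈ range (n ^ 2), a j) / ((n ^ 2 : ℕ) : ℝ)| + 2 * M / n)
      atTop (𝓝 0) := by
    simpa using h.abs.add (tendsto_const_div_atTop_nhds_zero_nat (2 * M))
  rw [tendsto_zero_iff_norm_tendsto_zero]
  refine squeeze_zero' (Eventually.of_forall fun m => norm_nonneg _) ?_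
    (hrhs.comp Nat.tendsto_sqrt_atTop)
  filter_upwards [eventually_ge_atTop 1] with m hm using hbound m hm

theorem stmt3_general {Ω : Type*} [MeasurableSpace Ω] (μ : Measure Ω) [IsProbabilityMeasure μ]
    (f : ℕ → Ω → ℝ) (M : ℝ)
    (hmeas : ∀ j, Measurable (f j))
    (hbdd : ∀ j x, |f j x| ≤ M)
    (horth : ∀ i j, i ≠ j → ∫ x, f i x * f j x ∂μ = 0) :
    ∀ᵐ x ∂μ, Tendsto (fun m : ℕ => (∑ j ∈ Finset.range m, f j x) / m) atTop (nhds 0) := by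
  have hL2 : ∀ j, MemLp (f j) 2 μ := fun j =>
    .of_bound (hmeas j).aestronglyMeasurable M (ae_of_all _ (hbdd j))
  have hsq : ∀ j, ∫ x, f j x ^ 2 ∂μ ≤ M ^ 2 := fun j => by
    simpa using integral_mono (hL2 j).integrable_sq (integrable_const (M ^ 2)) fun x =>
      sq_abs (f j x) ▸ pow_le_pow_left₀ (abs_nonneg _) (hbdd j x) 2
  have hsum :
      Summable fun n : ℕ => ∫ x, ((∑ j ∈ range (n ^ 2), f j x) / (n ^ 2 : ℕ)) ^ 2 ∂μ := by
    refine .of_nonneg_of_le (fun n => integral_nonneg fun x => sq_nonneg _)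
      (fun n => integral_sq_sum_range_div_le hL2 horth hsq (n ^ 2)) ?_
    simpa [div_eq_mul_inv] using
      (Real.summable_one_div_nat_pow.mpr one_lt_two).mul_left (M ^ 2)
  have hL2_avg : ∀ m : ℕ, MemLp (fun x => (∑ j ∈ range m, f j x) / m) 2 μ := by
    intro m
    simpa only [div_eq_mul_inv] using (memLp_finsetSum _ fun j _ => hL2 j).mul_const _
  filter_upwards [ae_tendsto_zero_of_summable_integral_sq (fun n => hL2_avg (n ^ 2)) hsum]
    with x hx
  exact tendsto_sum_range_div_of_tendsto_sq (hbdd · x) hx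

/-- uniformly bounded, mean-zero, mutually orthogonal functions on a
probability space satisfy `(1/m) ∑_{j<m} f_j → 0` almost everywhere. -/
theorem stmt3 {Ω : Type*} [MeasurableSpace Ω] (μ : Measure Ω) [IsProbabilityMeasure μ]
    (f : ℕ → Ω → ℝ) (M : ℝ)
    (hmeas : ∀ j, Measurable (f j))
    (hbdd : ∀ j x, |f j x| ≤ M)
    (hmean : ∀ j, ∫ x, f j x ∂μ = 0)
    (horth : ∀ i j, i ≠ j → ∫ x, f i x * f j x ∂μ = 0) :
    ∀ᵐ x ∂μ, Tendsto (fun m : ℕ => (∑ j ∈ Finset.range m, f j x) / m) atTop (nhds 0) :=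
  stmt3_general μ f M hmeas hbdd horth
end
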